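/- Let X ⊆ ℝ^m and Y ⊆ ℝ^n be nonempty compact convex sets. Let f₀ : ℝ^n → ℝ, f₁ : ℝ^m → ℝ, h : ℝ^n → ℝ^p, k : ℝ^m → ℝ^p be convex and differentiable (componentwise for h and k), and define 𝒬(x) = inf { f₀(y) + f₁(x) : y ∈ Y, h(y) + k(x) ≤ 0 } and θ_x(μ) = inf_{y ∈ Y} { f₀(y) + f₁(x) + μᵀ(h(y) + k(x)) } for μ ∈ ℝ₊^p. Assume for every x ∈ X there exists y_x ∈ Y (in the relative interior of Y when Y is not polyhedral) with h(y_x) + k(x) < 0, and that θ_{x̄} is strongly concave with constant α_D(x̄) > 0 for ‖·‖₂ on a convex set D_{x̄} ⊆ ℝ₊^p containing all optimal solutions of sup_{μ ≥ 0} θ_{x̄}(μ). Fix x̄ ∈ X and ε ≥ 0; let ŷ ∈ Y with h(ŷ) + k(x̄) ≤ 0 and f₀(ŷ) + f₁(x̄) ≤ 𝒬(x̄) + ε, and let μ̂ ∈ D_{x̄}, μ̂ ≥ 0, with θ_{x̄}(μ̂) ≥ 𝒬(x̄) − ε. Set U = max_{i=1,…,p} ‖∇k_i(x̄)‖₂ and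 η(ε, x̄) = ε + U · Diam(X) · sqrt(2εp/α_D(x̄)). Then the affine function C(x) = f₀(ŷ) + f₁(x̄) − η(ε, x̄) + ⟨∇f₁(x̄) + Σ_{i=1}^p μ̂_i ∇k_i(x̄), x − x̄⟩ satisfies 𝒬(x) ≥ C(x) for every x ∈ X, and 𝒬(x̄) − C(x̄) ≤ η(ε, x̄). -/

import Mathlib

open scoped RealInnerProductSpace Matrix
noncomputable section

/-- `ℝ^k` with the Euclidean norm. -/
abbrev E (k : ℕ) := EuclideanSpace ℝ (Fin k)

/-- A polyhedral set: a finite intersection of closed half-spaces. -/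
def IsPolyhedral {k : ℕ} (s : Set (E k)) : Prop :=
  ∃ (r : ℕ) (c : Fin r → E k) (d : Fin r → ℝ), s = {x : E k | ∀ i, ⟪c i, x⟫ ≤ d i}

/-- Strong concavity with constant `α` w.r.t. `‖·‖₂` on a set, at points where the function
is finite. -/
def StrongConcaveOnE {k : ℕ} (C : Set (E k)) (α : ℝ) (θ : E k → EReal) : Prop :=
  ∀ ⦃u⦄, u ∈ C → θ u ≠ ⊤ → θ u ≠ ⊥ → ∀ ⦃v⦄, v ∈ C → θ v ≠ ⊤ → θ v ≠ ⊥ →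
    ∀ t ∈ Set.Icc (0:ℝ) 1,
      ((t * (θ u).toReal + (1 - t) * (θ v).toReal
          + α * t * (1 - t) / 2 * ‖u - v‖ ^ 2 : ℝ) : EReal) ≤ θ (t • u + (1 - t) • v)

/-- The value function `𝒬(x) = inf { f₀(y) + f₁(x) : y ∈ Y, h(y) + k(x) ≤ 0 }`. -/
def QvarSep {n m p : ℕ} (Y : Set (E n)) (f₀ : E n → ℝ) (f₁ : E m → ℝ)
    (h : Fin p → E n → ℝ) (k : Fin p → E m → ℝ) (x : E m) : EReal :=
  ⨅ (y : E n) (_ : y ∈ Y) (_ : ∀ i, h i y + k i x ≤ 0), ((f₀ y + f₁ x : ℝ) : EReal)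

/-- The dual function `θ_x(μ) = inf_{y ∈ Y} { f₀(y) + f₁(x) + μᵀ(h(y) + k(x)) }`. -/
def thetaSep {n m p : ℕ} (Y : Set (E n)) (f₀ : E n → ℝ) (f₁ : E m → ℝ)
    (h : Fin p → E n → ℝ) (k : Fin p → E m → ℝ) (x : E m) (mu : E p) : EReal :=
  ⨅ (y : E n) (_ : y ∈ Y),
    ((f₀ y + f₁ x + ∑ i, mu i * (h i y + k i x) : ℝ) : EReal)

/-!
Slater's condition at `x̄` yields, by a separating hyperplane, an exact dual solution `μ*` with
`θ_x̄(μ*) = 𝒬(x̄)`. It lies in `D_x̄`, so strong concavity of `θ_x̄` gives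
`α_D/2 · ‖μ̂ - μ*‖² ≤ θ_x̄(μ*) - θ_x̄(μ̂) ≤ ε`. The gradient inequality applied to the Lagrangian
at `μ*` gives the exact cut `𝒬(x) ≥ 𝒬(x̄) + ⟨∇f₁(x̄) + Σ μ*ᵢ ∇kᵢ(x̄), x - x̄⟩`; replacing `μ*` by
`μ̂` in the slope costs at most `‖μ̂ - μ*‖ · √p · U · Diam(X)`, and `ŷ` is within `ε` of `𝒬(x̄)`.
-/

open Set Filter Topology

theorem EReal.exists_eq_coe_of_le_of_le {x : EReal} {a b : ℝ} (ha : (a : EReal) ≤ x)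
    (hb : x ≤ b) : ∃ r : ℝ, x = r :=
  ⟨x.toReal, (EReal.coe_toReal (ne_top_of_le_ne_top (EReal.coe_ne_top b) hb)
    (ne_bot_of_le_ne_bot (EReal.coe_ne_bot a) ha)).symm⟩

theorem le_of_forall_one_sub_mul_le {c d : ℝ} (h : ∀ t ∈ Ioo (0 : ℝ) 1, (1 - t) * c ≤ d) :
    c ≤ d := by
  have hlim : Tendsto (fun t : ℝ => (1 - t) * c) (𝓝[>] 0) (𝓝 c) := by
    have : Continuous (fun t : ℝ => (1 - t) * c) := by fun_prop
    simpa using (this.tendsto 0).mono_left nhdsWithin_le_nhds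
  exact le_of_tendsto hlim (eventually_of_mem (Ioo_mem_nhdsGT one_pos) h)

theorem nonneg_of_forall_pos_sub_mul_le {a b u : ℝ} (h : ∀ t : ℝ, 0 < t → a - t * b ≤ u) :
    0 ≤ b := by
  by_contra! hb
  have := h ((|u - a| + 1) / -b) (div_pos (by positivity) (neg_pos.mpr hb))
  rw [div_mul_eq_mul_div, div_neg, mul_div_assoc, div_self hb.ne] at this
  linarith [le_abs_self (u - a)]

theorem EuclideanSpace.norm_le_sqrt_card_mul {ι : Type*} [Fintype ι] {x : EuclideanSpace ℝ ι}
    {M : ℝ} (hx : ∀ i, |x i| ≤ M) (hM : 0 ≤ M) : ‖x‖ ≤ √(Fintype.card ι) * M := by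
  refine ((EuclideanSpace.basisFun ι ℝ).norm_le_card_mul_iSup_norm_inner x).trans ?_
  gcongr
  exact Real.iSup_le (fun i => by simpa using hx i) hM

theorem ConvexOn.add_inner_gradient_le {F : Type*} [NormedAddCommGroup F] [InnerProductSpace ℝ F]
    [CompleteSpace F] {s : Set F} {f : F → ℝ} (hf : ConvexOn ℝ s f) {a b : F} (ha : a ∈ s)
    (hb : b ∈ s) (hd : DifferentiableAt ℝ f a) : f a + ⟪gradient f a, b - a⟫ ≤ f b := by
  let L : ℝ →ᵃ[ℝ] F := AffineMap.lineMap a b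
  have hL : HasDerivAt (f ∘ L) ⟪gradient f a, b - a⟫ 0 := by
    have hfd := hd.hasGradientAt.hasFDerivAt
    rw [← AffineMap.lineMap_apply_zero (k := ℝ) a b] at hfd
    simpa using hfd.comp_hasDerivAt 0 AffineMap.hasDerivAt_lineMap
  have := (hf.comp_affineMap L).le_slope_of_hasDerivAt (x := 0) (y := 1) (by simpa [L])
    (by simpa [L]) one_pos hL
  rw [slope_def_field] at this
  simp only [Function.comp_apply, L, AffineMap.lineMap_apply_zero,
    AffineMap.lineMap_apply_one] at this
  linarith

theorem StrongConcaveOnE.half_mul_sq_norm_sub_le_of_isMaxOn {k : ℕ} {D : Set (E k)} {α : ℝ}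
    {θ : E k → EReal} (hθ : StrongConcaveOnE D α θ) (hD : Convex ℝ D) {u v : E k} (hu : u ∈ D)
    (hv : v ∈ D) {a b : ℝ} (ha : θ u = a) (hb : θ v = b) (hmax : IsMaxOn θ D v) :
    α / 2 * ‖u - v‖ ^ 2 ≤ b - a := by
  refine le_of_forall_one_sub_mul_le fun t ht => ?_
  have hcomb := hθ hu (by simp [ha]) (by simp [ha]) hv (by simp [hb]) (by simp [hb]) t
    ⟨ht.1.le, ht.2.le⟩
  have hle := hcomb.trans (hmax (hD hu hv ht.1.le (sub_nonneg.2 ht.2.le) (by ring)))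
  rw [ha, hb, EReal.toReal_coe, EReal.toReal_coe] at hle
  have hle' : t * ((1 - t) * (α / 2 * ‖u - v‖ ^ 2)) ≤ t * (b - a) := by
    have := EReal.coe_le_coe_iff.mp hle
    linarith
  exact le_of_mul_le_mul_left hle' ht.1

theorem StrongDual.apply_prod_eq_sum {ι : Type*} [Fintype ι] [DecidableEq ι]
    (f : StrongDual ℝ ((ι → ℝ) × ℝ)) (z : (ι → ℝ) × ℝ) :
    f z = ∑ i, z.1 i * f (Pi.single i 1, 0) + z.2 * f (0, 1) := by
  have hz : z = ∑ i, z.1 i • ((Pi.single i 1 : ι → ℝ), (0 : ℝ)) + z.2 • ((0 : ι → ℝ), (1 : ℝ)) := by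
    ext j
    · simp [Prod.fst_sum, Finset.sum_apply, Pi.single_apply]
    · simp [Prod.snd_sum]
  conv_lhs => rw [hz]
  simp only [map_add, map_sum, map_smul, smul_eq_mul]

theorem exists_nonneg_le_lagrangian_of_slater {ι F : Type*} [Fintype ι] [AddCommGroup F]
    [Module ℝ F] {Y : Set F} {r : F → ℝ} {g : ι → F → ℝ} (hr : ConvexOn ℝ Y r)
    (hg : ∀ i, ConvexOn ℝ Y (g i)) {y₀ : F} (hy₀ : y₀ ∈ Y) (hslater : ∀ i, g i y₀ < 0) {q : ℝ}
    (hq : ∀ y ∈ Y, (∀ i, g i y ≤ 0) → q ≤ r y) :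
    ∃ μ : ι → ℝ, (∀ i, 0 ≤ μ i) ∧ ∀ y ∈ Y, q ≤ r y + ∑ i, μ i * g i y := by
  classical
  -- Separate the convex set `A` of dominated (constraint, value) pairs from the open orthant `S`
  -- below `(0, q)`; the Slater point forces the value coefficient `c` to be positive.
  let A : Set ((ι → ℝ) × ℝ) := {z | ∃ y ∈ Y, (∀ i, g i y ≤ z.1 i) ∧ r y ≤ z.2}
  let S : Set ((ι → ℝ) × ℝ) := (univ.pi fun _ => Iio 0) ×ˢ Iio q
  have hA : Convex ℝ A := by
    rintro _ ⟨y, hy, hgy, hry⟩ _ ⟨y', hy', hgy', hry'⟩ a b ha hb hab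
    refine ⟨a • y + b • y', hr.1 hy hy' ha hb hab, fun i => ?_, ?_⟩
    · refine ((hg i).2 hy hy' ha hb hab).trans ?_
      simp only [smul_eq_mul, Prod.fst_add, Prod.smul_fst, Pi.add_apply, Pi.smul_apply]
      gcongr <;> simp_all
    · refine (hr.2 hy hy' ha hb hab).trans ?_
      simp only [smul_eq_mul, Prod.snd_add, Prod.smul_snd]
      gcongr
  have hS : Convex ℝ S := (convex_pi fun _ _ => convex_Iio 0).prod (convex_Iio q)
  have hSo : IsOpen S := (isOpen_set_pi finite_univ fun _ _ => isOpen_Iio).prod isOpen_Iio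
  have hSA : Disjoint S A := by
    refine Set.disjoint_left.mpr ?_
    rintro z ⟨hz₁, hz₂⟩ ⟨y, hy, hgy, hry⟩
    have := hq y hy fun i => (hgy i).trans (hz₁ i (mem_univ i)).le
    exact absurd hz₂ (not_lt.mpr (this.trans hry))
  obtain ⟨f, u, hfS, hfA⟩ := geometric_hahn_banach_open hS hSo hA hSA
  set w : ι → ℝ := fun i => f (Pi.single i 1, 0)
  set c : ℝ := f (0, 1)
  have hf : ∀ z, f z = ∑ i, z.1 i * w i + z.2 * c := StrongDual.apply_prod_eq_sum f
  have hclS : ∀ z : (ι → ℝ) × ℝ, (∀ i, z.1 i ≤ 0) → z.2 ≤ q → f z ≤ u := by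
    intro z hz₁ hz₂
    refine closure_minimal (fun z hz => (hfS z hz).le)
      (isClosed_le f.continuous continuous_const) ?_
    rw [closure_prod_eq, closure_pi_set, closure_Iio, closure_Iio]
    exact ⟨fun i _ => hz₁ i, hz₂⟩
  have hw : ∀ i, 0 ≤ w i := by
    intro i
    refine nonneg_of_forall_pos_sub_mul_le (a := q * c) (u := u) fun t ht => ?_
    have := hclS (-(t • Pi.single i 1), q) (fun j => ?_) le_rfl
    · simpa [hf, Pi.single_apply, sub_eq_neg_add, mul_comm] using this
    · by_cases hj : j = i <;> simp [hj, ht.le]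
  have hc : 0 < c := by
    have hc0 : 0 ≤ c := nonneg_of_forall_pos_sub_mul_le (a := q * c) (u := u) fun t ht => by
      simpa [hf, sub_mul, mul_comm] using hclS (0, q - t) (fun _ => le_rfl) (by linarith)
    refine hc0.lt_of_ne fun hc0' => ?_
    have h₁ := hfS (fun i => g i y₀, q - 1) ⟨fun i _ => hslater i, by simp⟩
    have h₂ := hfA (fun i => g i y₀, r y₀) ⟨y₀, hy₀, fun _ => le_rfl, le_rfl⟩
    simp only [hf, ← hc0', mul_zero, add_zero] at h₁ h₂
    linarith
  refine ⟨fun i => w i / c, fun i => div_nonneg (hw i) hc.le, fun y hy => ?_⟩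
  have h₁ := hclS (0, q) (fun _ => le_rfl) le_rfl
  have h₂ := hfA (fun i => g i y, r y) ⟨y, hy, fun _ => le_rfl, le_rfl⟩
  simp only [hf, Pi.zero_apply, zero_mul, Finset.sum_const_zero, zero_add] at h₁ h₂
  have : ∑ i, w i / c * g i y = (∑ i, g i y * w i) / c := by
    rw [Finset.sum_div]; exact Finset.sum_congr rfl fun i _ => by ring
  rw [this, ← sub_le_iff_le_add', le_div_iff₀ hc]
  linarith

section Separable

variable {n m p : ℕ} {Y : Set (E n)} {f₀ : E n → ℝ} {f₁ : E m → ℝ} {h : Fin p → E n → ℝ}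
  {k : Fin p → E m → ℝ}

def lagrangianSep (f₀ : E n → ℝ) (f₁ : E m → ℝ) (h : Fin p → E n → ℝ) (k : Fin p → E m → ℝ)
    (x : E m) (mu : E p) (y : E n) : ℝ :=
  f₀ y + f₁ x + ∑ i, mu i * (h i y + k i x)

def gradXLagrangianSep (f₁ : E m → ℝ) (k : Fin p → E m → ℝ) (x : E m) (mu : E p) : E m :=
  gradient f₁ x + ∑ i, mu i • gradient (k i) x

theorem thetaSep_le_lagrangianSep {x : E m} {mu : E p} {y : E n} (hy : y ∈ Y) :
    thetaSep Y f₀ f₁ h k x mu ≤ lagrangianSep f₀ f₁ h k x mu y :=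
  iInf₂_le y hy

theorem le_thetaSep {x : E m} {mu : E p} {c : EReal}
    (hc : ∀ y ∈ Y, c ≤ lagrangianSep f₀ f₁ h k x mu y) : c ≤ thetaSep Y f₀ f₁ h k x mu :=
  le_iInf₂ hc

theorem QvarSep_le {x : E m} {y : E n} (hy : y ∈ Y) (hfeas : ∀ i, h i y + k i x ≤ 0) :
    QvarSep Y f₀ f₁ h k x ≤ ((f₀ y + f₁ x : ℝ) : EReal) :=
  (iInf_le _ y).trans (by rw [iInf_pos hy, iInf_pos hfeas])

theorem le_QvarSep {x : E m} {c : EReal}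
    (hc : ∀ y ∈ Y, (∀ i, h i y + k i x ≤ 0) → c ≤ ((f₀ y + f₁ x : ℝ) : EReal)) :
    c ≤ QvarSep Y f₀ f₁ h k x :=
  le_iInf fun y => le_iInf fun hy => le_iInf fun hfeas => hc y hy hfeas

theorem lagrangianSep_le_of_feasible {x : E m} {mu : E p} {y : E n} (hmu : ∀ i, 0 ≤ mu i)
    (hfeas : ∀ i, h i y + k i x ≤ 0) : lagrangianSep f₀ f₁ h k x mu y ≤ f₀ y + f₁ x := by
  have : ∑ i, mu i * (h i y + k i x) ≤ 0 :=
    Finset.sum_nonpos fun i _ => mul_nonpos_of_nonneg_of_nonpos (hmu i) (hfeas i)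
  unfold lagrangianSep
  linarith

theorem thetaSep_le_QvarSep {x : E m} {mu : E p} (hmu : ∀ i, 0 ≤ mu i) :
    thetaSep Y f₀ f₁ h k x mu ≤ QvarSep Y f₀ f₁ h k x :=
  le_QvarSep fun _ hy hfeas => (thetaSep_le_lagrangianSep hy).trans
    (EReal.coe_le_coe_iff.mpr (lagrangianSep_le_of_feasible hmu hfeas))

theorem exists_thetaSep_eq_of_slater (hf₀c : ConvexOn ℝ Y f₀)
    (hhc : ∀ i, ConvexOn ℝ Y (h i)) {x : E m} {y₀ : E n} (hy₀ : y₀ ∈ Y)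
    (hslater : ∀ i, h i y₀ + k i x < 0) {q : ℝ} (hq : QvarSep Y f₀ f₁ h k x = q) :
    ∃ mu : E p, (∀ i, 0 ≤ mu i) ∧ (∀ y ∈ Y, q ≤ lagrangianSep f₀ f₁ h k x mu y) ∧
      thetaSep Y f₀ f₁ h k x mu = q := by
  obtain ⟨mu, hmu, hle⟩ := exists_nonneg_le_lagrangian_of_slater (hf₀c.add_const (f₁ x))
    (fun i => (hhc i).add_const (k i x)) hy₀ hslater
    fun y hy hfeas => EReal.coe_le_coe_iff.mp (hq ▸ QvarSep_le hy hfeas)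
  have hle' : ∀ y ∈ Y, q ≤ lagrangianSep f₀ f₁ h k x (WithLp.toLp 2 mu) y := fun y hy => by
    simpa [lagrangianSep, add_assoc] using hle y hy
  exact ⟨WithLp.toLp 2 mu, hmu, hle', le_antisymm (hq ▸ thetaSep_le_QvarSep hmu)
    (le_thetaSep fun y hy => EReal.coe_le_coe_iff.mpr (hle' y hy))⟩

theorem lagrangianSep_add_inner_le (hf₁c : ConvexOn ℝ univ f₁) (hf₁d : Differentiable ℝ f₁)
    (hkc : ∀ i, ConvexOn ℝ univ (k i)) (hkd : ∀ i, Differentiable ℝ (k i)) {mu : E p}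
    (hmu : ∀ i, 0 ≤ mu i) (xb x : E m) (y : E n) :
    lagrangianSep f₀ f₁ h k xb mu y + ⟪gradXLagrangianSep f₁ k xb mu, x - xb⟫
      ≤ lagrangianSep f₀ f₁ h k x mu y := by
  have hf₁ := hf₁c.add_inner_gradient_le (mem_univ xb) (mem_univ x) (hf₁d xb)
  have hk : ∑ i, mu i * (h i y + k i xb + ⟪gradient (k i) xb, x - xb⟫)
      ≤ ∑ i, mu i * (h i y + k i x) :=
    Finset.sum_le_sum fun i _ => by
      have := (hkc i).add_inner_gradient_le (mem_univ xb) (mem_univ x) (hkd i xb)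
      exact mul_le_mul_of_nonneg_left (by linarith) (hmu i)
  simp only [lagrangianSep, gradXLagrangianSep, inner_add_left, sum_inner,
    real_inner_smul_left, mul_add, Finset.sum_add_distrib] at hk ⊢
  linarith

theorem coe_add_inner_le_QvarSep (hf₁c : ConvexOn ℝ univ f₁) (hf₁d : Differentiable ℝ f₁)
    (hkc : ∀ i, ConvexOn ℝ univ (k i)) (hkd : ∀ i, Differentiable ℝ (k i)) {xb : E m}
    {mu : E p} (hmu : ∀ i, 0 ≤ mu i) {q : ℝ}
    (hq : ∀ y ∈ Y, q ≤ lagrangianSep f₀ f₁ h k xb mu y) (x : E m) :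
    ((q + ⟪gradXLagrangianSep f₁ k xb mu, x - xb⟫ : ℝ) : EReal) ≤ QvarSep Y f₀ f₁ h k x := by
  refine le_QvarSep fun y hy hfeas => EReal.coe_le_coe_iff.mpr ?_
  calc q + ⟪gradXLagrangianSep f₁ k xb mu, x - xb⟫
      ≤ lagrangianSep f₀ f₁ h k xb mu y + ⟪gradXLagrangianSep f₁ k xb mu, x - xb⟫ := by
        gcongr; exact hq y hy
    _ ≤ lagrangianSep f₀ f₁ h k x mu y := lagrangianSep_add_inner_le hf₁c hf₁d hkc hkd hmu xb x y
    _ ≤ f₀ y + f₁ x := lagrangianSep_le_of_feasible hmu hfeas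

theorem inner_gradXLagrangianSep_le_add {xb d : E m} {Dm r : ℝ} (hd : ‖d‖ ≤ Dm) {mu mu' : E p}
    (hmu : ‖mu - mu'‖ ^ 2 ≤ r) :
    ⟪gradXLagrangianSep f₁ k xb mu, d⟫ ≤
      ⟪gradXLagrangianSep f₁ k xb mu', d⟫ + (⨆ i, ‖gradient (k i) xb‖) * Dm * √(r * p) := by
  set U := ⨆ i, ‖gradient (k i) xb‖
  have hU0 : 0 ≤ U := Real.iSup_nonneg fun _ => norm_nonneg _
  set b : E p := WithLp.toLp 2 fun i => ⟪gradient (k i) xb, d⟫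
  have hU : ∀ i, ‖gradient (k i) xb‖ ≤ U :=
    le_ciSup (f := fun j => ‖gradient (k j) xb‖) (Set.finite_range _).bddAbove
  have hb : ‖b‖ ≤ √p * (U * Dm) := by
    simpa using EuclideanSpace.norm_le_sqrt_card_mul (x := b)
      (fun i => (abs_real_inner_le_norm _ _).trans (mul_le_mul (hU i) hd (norm_nonneg _) hU0))
      (mul_nonneg hU0 ((norm_nonneg d).trans hd))
  have hsub : gradXLagrangianSep f₁ k xb mu - gradXLagrangianSep f₁ k xb mu' =
      ∑ i, (mu - mu') i • gradient (k i) xb := by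
    simp [gradXLagrangianSep, sub_smul, Finset.sum_sub_distrib]
  have heq : ⟪gradXLagrangianSep f₁ k xb mu - gradXLagrangianSep f₁ k xb mu', d⟫ =
      ⟪mu - mu', b⟫ := by
    rw [hsub, sum_inner, PiLp.inner_apply]
    simp [b, real_inner_smul_left, mul_comm]
  have hdev : ⟪mu - mu', b⟫ ≤ U * Dm * √(r * p) := by
    calc ⟪mu - mu', b⟫ ≤ ‖mu - mu'‖ * ‖b‖ := real_inner_le_norm _ _
      _ ≤ √r * (√p * (U * Dm)) := by gcongr; exact Real.le_sqrt_of_sq_le hmu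
      _ = U * Dm * √(r * p) := by rw [Real.sqrt_mul' _ (Nat.cast_nonneg p)]; ring
  rw [inner_sub_left] at heq
  linarith

end Separable

theorem inexact_cut_separable_nonlinear_general
    {n m p : ℕ} (X : Set (E m)) (Y : Set (E n))
    (hYcv : Convex ℝ Y)
    (f₀ : E n → ℝ) (hf₀c : ConvexOn ℝ Set.univ f₀)
    (f₁ : E m → ℝ) (hf₁c : ConvexOn ℝ Set.univ f₁) (hf₁d : Differentiable ℝ f₁)
    (h : Fin p → E n → ℝ)
    (hhc : ∀ i, ConvexOn ℝ Set.univ (h i))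
    (k : Fin p → E m → ℝ)
    (hkc : ∀ i, ConvexOn ℝ Set.univ (k i)) (hkd : ∀ i, Differentiable ℝ (k i))
    -- Slater-type condition
    (hslater : ∀ x ∈ X, ∃ y ∈ Y, (¬ IsPolyhedral Y → y ∈ intrinsicInterior ℝ Y) ∧
      ∀ i, h i y + k i x < 0)
    (xb : E m) (hxb : xb ∈ X)
    (ε : ℝ)
    -- strong concavity of the dual function on D_x̄ ⊆ ℝ₊^p containing the dual optima
    (αD : ℝ) (hαD : 0 < αD) (D : Set (E p)) (hDcv : Convex ℝ D)
    (hDnn : ∀ mu ∈ D, ∀ i, 0 ≤ mu i)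
    (hDopt : ∀ mu : E p, (∀ i, 0 ≤ mu i) →
      (∀ mu' : E p, (∀ i, 0 ≤ mu' i) →
        thetaSep Y f₀ f₁ h k xb mu' ≤ thetaSep Y f₀ f₁ h k xb mu) →
      mu ∈ D)
    (hconc : StrongConcaveOnE D αD (thetaSep Y f₀ f₁ h k xb))
    -- ŷ: ε-optimal feasible primal solution at x̄
    (yh : E n) (hyhY : yh ∈ Y) (hyhfeas : ∀ i, h i yh + k i xb ≤ 0)
    (hyheps : ((f₀ yh + f₁ xb : ℝ) : EReal) ≤ QvarSep Y f₀ f₁ h k xb + (ε : EReal))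
    -- μ̂ ∈ D_x̄, μ̂ ≥ 0: ε-optimal dual solution at x̄
    (muh : E p) (hinD : muh ∈ D)
    (hdualeps : QvarSep Y f₀ f₁ h k xb - (ε : EReal) ≤ thetaSep Y f₀ f₁ h k xb muh)
    -- Diam(X)
    (Dm : ℝ) (hDm : IsGreatest ((fun pr : E m × E m => ‖pr.2 - pr.1‖) '' (X ×ˢ X)) Dm) :
    let U : ℝ := ⨆ i, ‖gradient (k i) xb‖
    let η : ℝ := ε + U * Dm * Real.sqrt (2 * ε * p / αD)
    let s : E m := gradient f₁ xb + ∑ i, muh i • gradient (k i) xb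
    (∀ x ∈ X,
      ((f₀ yh + f₁ xb - η + ⟪s, x - xb⟫ : ℝ) : EReal) ≤ QvarSep Y f₀ f₁ h k x) ∧
    QvarSep Y f₀ f₁ h k xb ≤ ((f₀ yh + f₁ xb - η + ⟪s, xb - xb⟫ + η : ℝ) : EReal) := by
  intro U η s
  have hQ_le := QvarSep_le (f₀ := f₀) (f₁ := f₁) hyhY hyhfeas
  have hQ_ge := EReal.sub_le_of_le_add hyheps
  rw [← EReal.coe_sub] at hQ_ge
  obtain ⟨q, hq⟩ := EReal.exists_eq_coe_of_le_of_le hQ_ge hQ_le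
  rw [hq, ← EReal.coe_add, EReal.coe_le_coe_iff] at hyheps
  rw [hq, ← EReal.coe_sub] at hdualeps
  obtain ⟨a, ha⟩ := EReal.exists_eq_coe_of_le_of_le hdualeps (thetaSep_le_lagrangianSep hyhY)
  rw [ha, EReal.coe_le_coe_iff] at hdualeps
  obtain ⟨y₀, hy₀, -, hy₀slater⟩ := hslater xb hxb
  obtain ⟨mus, hmus, hmusq, hθmus⟩ := exists_thetaSep_eq_of_slater
    (hf₀c.subset (subset_univ Y) hYcv) (fun i => (hhc i).subset (subset_univ Y) hYcv) hy₀
    hy₀slater hq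
  have hmax : ∀ mu : E p, (∀ i, 0 ≤ mu i) →
      thetaSep Y f₀ f₁ h k xb mu ≤ thetaSep Y f₀ f₁ h k xb mus :=
    fun mu hmu => hθmus ▸ hq ▸ thetaSep_le_QvarSep hmu
  have hgap := hconc.half_mul_sq_norm_sub_le_of_isMaxOn hDcv hinD (hDopt mus hmus hmax) ha hθmus
    fun mu hmu => hmax mu (hDnn mu hmu)
  refine ⟨fun x hx => le_trans (EReal.coe_le_coe_iff.mpr ?_)
    (coe_add_inner_le_QvarSep hf₁c hf₁d hkc hkd hmus hmusq x),
    hQ_le.trans (EReal.coe_le_coe_iff.mpr (by simp))⟩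
  have hslope := inner_gradXLagrangianSep_le_add (k := k) (f₁ := f₁) (xb := xb)
    (hDm.2 ⟨(xb, x), ⟨hxb, hx⟩, rfl⟩) (r := 2 * ε / αD) (mu := muh) (mu' := mus)
    (by rw [le_div_iff₀ hαD]; linarith)
  rw [show 2 * ε / αD * p = 2 * ε * p / αD by ring] at hslope
  change _ + ⟪gradXLagrangianSep f₁ k xb muh, x - xb⟫ ≤ _
  linarith

/-- Inexact cut, case (g): separable objective and separable nonlinear coupling constraints,
no linear constraints. With `U = max_i ‖∇kᵢ(x̄)‖₂` and
`η(ε, x̄) = ε + U·Diam(X)·√(2εp/α_D(x̄))`, the affine function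
`C(x) = f₀(ŷ) + f₁(x̄) − η(ε, x̄) + ⟨∇f₁(x̄) + Σ μ̂ᵢ∇kᵢ(x̄), x − x̄⟩` is a cut for `𝒬` at
`x̄` and `𝒬(x̄) − C(x̄) ≤ η(ε, x̄)`. -/
theorem inexact_cut_separable_nonlinear
    {n m p : ℕ} (X : Set (E m)) (Y : Set (E n))
    (hXne : X.Nonempty) (hXcp : IsCompact X) (hXcv : Convex ℝ X)
    (hYne : Y.Nonempty) (hYcp : IsCompact Y) (hYcv : Convex ℝ Y)
    (f₀ : E n → ℝ) (hf₀c : ConvexOn ℝ Set.univ f₀) (hf₀d : Differentiable ℝ f₀)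
    (f₁ : E m → ℝ) (hf₁c : ConvexOn ℝ Set.univ f₁) (hf₁d : Differentiable ℝ f₁)
    (h : Fin p → E n → ℝ)
    (hhc : ∀ i, ConvexOn ℝ Set.univ (h i)) (hhd : ∀ i, Differentiable ℝ (h i))
    (k : Fin p → E m → ℝ)
    (hkc : ∀ i, ConvexOn ℝ Set.univ (k i)) (hkd : ∀ i, Differentiable ℝ (k i))
    -- Slater-type condition
    (hslater : ∀ x ∈ X, ∃ y ∈ Y, (¬ IsPolyhedral Y → y ∈ intrinsicInterior ℝ Y) ∧
      ∀ i, h i y + k i x < 0)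
    (xb : E m) (hxb : xb ∈ X)
    (ε : ℝ) (hε : 0 ≤ ε)
    -- strong concavity of the dual function on D_x̄ ⊆ ℝ₊^p containing the dual optima
    (αD : ℝ) (hαD : 0 < αD) (D : Set (E p)) (hDcv : Convex ℝ D)
    (hDnn : ∀ mu ∈ D, ∀ i, 0 ≤ mu i)
    (hDopt : ∀ mu : E p, (∀ i, 0 ≤ mu i) →
      (∀ mu' : E p, (∀ i, 0 ≤ mu' i) →
        thetaSep Y f₀ f₁ h k xb mu' ≤ thetaSep Y f₀ f₁ h k xb mu) →
      mu ∈ D)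
    (hconc : StrongConcaveOnE D αD (thetaSep Y f₀ f₁ h k xb))
    -- ŷ: ε-optimal feasible primal solution at x̄
    (yh : E n) (hyhY : yh ∈ Y) (hyhfeas : ∀ i, h i yh + k i xb ≤ 0)
    (hyheps : ((f₀ yh + f₁ xb : ℝ) : EReal) ≤ QvarSep Y f₀ f₁ h k xb + (ε : EReal))
    -- μ̂ ∈ D_x̄, μ̂ ≥ 0: ε-optimal dual solution at x̄
    (muh : E p) (hmuh : ∀ i, 0 ≤ muh i) (hinD : muh ∈ D)
    (hdualeps : QvarSep Y f₀ f₁ h k xb - (ε : EReal) ≤ thetaSep Y f₀ f₁ h k xb muh)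
    -- Diam(X)
    (Dm : ℝ) (hDm : IsGreatest ((fun pr : E m × E m => ‖pr.2 - pr.1‖) '' (X ×ˢ X)) Dm) :
    let U : ℝ := ⨆ i, ‖gradient (k i) xb‖
    let η : ℝ := ε + U * Dm * Real.sqrt (2 * ε * p / αD)
    let s : E m := gradient f₁ xb + ∑ i, muh i • gradient (k i) xb
    (∀ x ∈ X,
      ((f₀ yh + f₁ xb - η + ⟪s, x - xb⟫ : ℝ) : EReal) ≤ QvarSep Y f₀ f₁ h k x) ∧
    QvarSep Y f₀ f₁ h k xb ≤ ((f₀ yh + f₁ xb - η + ⟪s, xb - xb⟫ + η : ℝ) : EReal) :=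
  inexact_cut_separable_nonlinear_general X Y hYcv f₀ hf₀c f₁ hf₁c hf₁d h hhc k hkc hkd hslater xb
    hxb ε αD hαD D hDcv hDnn hDopt hconc yh hyhY hyhfeas hyheps muh hinD hdualeps Dm hDm
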